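/- Suppose 𝒢 satisfies balanced exposure, the subgraph induced on the persuadable nodes 𝒫 is connected, and at least one persuadable node is adjacent to the two zealots. Let v = ω(1) = 1/(1 + exp(γ(1 − δ))). If 1 − 2γ(1 − v) > 0, then the harmonic state x̄ is linearly stable (the Jacobian block J_𝒫(x̄) has only strictly negative eigenvalues); if 1 − 2γ(1 − v) ≤ 0, then J_𝒫(x̄) has a nonnegative eigenvalue, so x̄ is not linearly stable. -/

import Mathlib

open Finset Filter

namespace SBCM

variable {V : Type*} [Fintype V] [DecidableEq V]

/-- Sigmoidal influence weight. -/
noncomputable def wt (G : SimpleGraph V) [DecidableRel G.Adj] (γ δ : ℝ) (x : V → ℝ)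
    (i j : V) : ℝ :=
  if G.Adj i j then 1 / (1 + Real.exp (γ * (x i - x j) ^ 2 - γ * δ)) else 0

/-- SBCM update operator. -/
noncomputable def F (G : SimpleGraph V) [DecidableRel G.Adj] (Z : Finset V) (γ δ : ℝ)
    (x : V → ℝ) (i : V) : ℝ :=
  if i ∈ Z then 0
  else (∑ j, wt G γ δ x i j * (x j - x i)) / (∑ j, wt G γ δ x i j)

/-- Jacobian block over the persuadable nodes. -/
noncomputable def Jp (G : SimpleGraph V) [DecidableRel G.Adj] (Z : Finset V) (γ δ : ℝ)
    (x : V → ℝ) : Matrix {v : V // v ∉ Z} {v : V // v ∉ Z} ℝ :=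
  fun i j => fderiv ℝ (fun y : V → ℝ => F G Z γ δ y i.val) x (Pi.single (j : V) (1 : ℝ))

/-- `μ` is a (real) eigenvalue of the matrix `M`. -/
def HasEig {n : Type*} [Fintype n] (M : Matrix n n ℝ) (μ : ℝ) : Prop :=
  ∃ φ : n → ℝ, φ ≠ 0 ∧ M.mulVec φ = μ • φ

/-- All eigenvalues of `M` are strictly negative. -/
def LinStable {n : Type*} [Fintype n] (M : Matrix n n ℝ) : Prop :=
  ∀ μ : ℝ, HasEig M μ → μ < 0

/-- `M` has a strictly positive eigenvalue. -/
def LinUnstable {n : Type*} [Fintype n] (M : Matrix n n ℝ) : Prop :=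
  ∃ μ : ℝ, 0 < μ ∧ HasEig M μ

end SBCM

namespace SBCM

/-- The harmonic state of a balanced-exposure graph: zealot `z₁` holds opinion `−1`,
zealot `z₂` holds opinion `+1`, and all persuadable nodes hold opinion `0`. -/
noncomputable def xbarBE {V : Type*} [DecidableEq V] (z₁ z₂ : V) : V → ℝ :=
  fun v => if v = z₁ then -1 else if v = z₂ then 1 else 0

end SBCM

/-!
At the harmonic state every persuadable node has zero net influence, so the quotient rule reduces
row `i` of the Jacobian to the derivative of the net influence divided by the strength `sᵢ`.
Computing it gives `J_𝒫(x̄) = -diag(s)⁻¹ A` with `A = ω(0) L + κ B`, where `L` is the Laplacian of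
the persuadable subgraph, `B` marks the persuadable nodes adjacent to the zealots, and
`κ = 2 (ω(1) + ω'(1)) = 2 ω(1) (1 - 2γ(1 - ω(1)))` collects the zealots' weights and their
derivatives. If `κ > 0`, `A` is positive definite (on a connected graph `L` vanishes only on
constants, which `κ B` sees), and an eigenpair `Jφ = μφ` gives `φᵀAφ = -μ Σ sᵢ φᵢ²`, so `μ < 0`.
If `κ ≤ 0`, the quadratic form of `A` at the constant vector is `κ |B| ≤ 0`, so the symmetric
matrix `diag(s)^{-1/2} A diag(s)^{-1/2}`, which is similar to `-J_𝒫(x̄)`, has an eigenvalue `≤ 0`.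
-/

open Matrix

theorem HasFDerivAt.div_of_eq_zero {E : Type*} [NormedAddCommGroup E] [NormedSpace ℝ E]
    {f g : E → ℝ} {f' g' : E →L[ℝ] ℝ} {x : E} (hf : HasFDerivAt f f' x) (hg : HasFDerivAt g g' x)
    (hfx : f x = 0) (hgx : g x ≠ 0) : HasFDerivAt (fun y => f y / g y) ((g x)⁻¹ • f') x := by
  simpa [div_eq_mul_inv, hfx] using hf.fun_mul ((hasDerivAt_inv hgx).comp_hasFDerivAt x hg)

theorem Fintype.sum_eq_add_add_sum_subtype_notMem {V M : Type*} [Fintype V] [DecidableEq V]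
    [AddCommMonoid M] {z₁ z₂ : V} (hzz : z₁ ≠ z₂) (f : V → M) :
    ∑ j, f j = f z₁ + f z₂ + ∑ j : {v : V // v ∉ ({z₁, z₂} : Finset V)}, f j := by
  rw [← Finset.sum_add_sum_compl ({z₁, z₂} : Finset V) f, Finset.sum_pair hzz]
  congr 1
  exact Finset.sum_subtype _ (fun x => Finset.mem_compl) f

theorem Matrix.IsHermitian.exists_eigenvalues_nonpos {n : Type*} [Fintype n] [DecidableEq n]
    {S : Matrix n n ℝ} (hS : S.IsHermitian) {ψ : n → ℝ} (hψ : ψ ≠ 0) (hq : ψ ⬝ᵥ S *ᵥ ψ ≤ 0) :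
    ∃ j, hS.eigenvalues j ≤ 0 := by
  by_contra! h
  have := (hS.posDef_iff_eigenvalues_pos.mpr h).dotProduct_mulVec_pos hψ
  rw [star_trivial] at this
  linarith

theorem SimpleGraph.lapMatrix_mulVec_apply_eq_sum {n : Type*} [Fintype n] [DecidableEq n]
    (H : SimpleGraph n) [DecidableRel H.Adj] (x : n → ℝ) (i : n) :
    (H.lapMatrix ℝ *ᵥ x) i = ∑ j, if H.Adj i j then x i - x j else 0 := by
  rw [H.lapMatrix_mulVec_apply, H.neighborFinset_eq_filter, Finset.sum_filter,
    H.degree_eq_sum_if_adj, Finset.sum_mul, ← Finset.sum_sub_distrib]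
  refine Finset.sum_congr rfl fun j _ => ?_
  split_ifs <;> ring

theorem SimpleGraph.posDef_smul_lapMatrix_add_diagonal {n : Type*} [Fintype n] [DecidableEq n]
    {H : SimpleGraph n} [DecidableRel H.Adj] (hH : H.Connected) {w : ℝ} (hw : 0 < w)
    {c : n → ℝ} (hc : 0 ≤ c) (hc' : ∃ i, 0 < c i) :
    (w • H.lapMatrix ℝ + diagonal c).PosDef := by
  refine .of_dotProduct_mulVec_pos (((H.isHermitian_lapMatrix ℝ).smul (.all w)).add
    (isHermitian_diagonal c)) fun x hx => ?_
  obtain ⟨i₀, hi₀⟩ := hc'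
  have hdiag : x ⬝ᵥ diagonal c *ᵥ x = ∑ i, c i * x i ^ 2 := by
    simp only [dotProduct, mulVec_diagonal]
    exact Finset.sum_congr rfl fun i _ => by ring
  have hL : 0 ≤ x ⬝ᵥ H.lapMatrix ℝ *ᵥ x := by
    simpa using (H.posSemidef_lapMatrix ℝ).dotProduct_mulVec_nonneg x
  have hC : 0 ≤ ∑ i, c i * x i ^ 2 :=
    Finset.sum_nonneg fun i _ => mul_nonneg (hc i) (sq_nonneg _)
  rw [star_trivial, add_mulVec, dotProduct_add, smul_mulVec, dotProduct_smul, smul_eq_mul, hdiag]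
  rcases hL.lt_or_eq with hL | hL
  · positivity
  · have hconst : ∀ i, x i = x i₀ := fun i =>
      (H.lapMatrix_toLinearMap₂'_apply'_eq_zero_iff_forall_reachable x).mp
        (by rw [toLinearMap₂'_apply']; exact hL.symm) i i₀ (hH.preconnected i i₀)
    have hx₀ : x i₀ ≠ 0 := fun h => hx (funext fun i => (hconst i).trans h)
    have : 0 < ∑ i, c i * x i ^ 2 := Finset.sum_pos'
      (fun i _ => mul_nonneg (hc i) (sq_nonneg _)) ⟨i₀, Finset.mem_univ _, by positivity⟩
    rw [← hL]
    linarith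

namespace SBCM

section LinearStability

variable {n : Type*} [Fintype n] [DecidableEq n] {d : n → ℝ} {A : Matrix n n ℝ}

theorem linStable_neg_diagonal_mul (hd : ∀ i, 0 < d i) (hA : A.PosDef) :
    LinStable (-(diagonal d * A)) := by
  rintro μ ⟨φ, hφ, hJφ⟩
  have hAφ : A *ᵥ φ = fun i => -μ * φ i / d i := by
    ext i
    have := congrFun hJφ i
    simp only [neg_mulVec, ← mulVec_mulVec, mulVec_diagonal, Pi.neg_apply, Pi.smul_apply,
      smul_eq_mul] at this
    field_simp [(hd i).ne']
    linarith
  have hpos := hA.dotProduct_mulVec_pos hφ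
  rw [star_trivial, hAφ] at hpos
  have hsum : 0 < ∑ i, φ i * φ i / d i := by
    obtain ⟨i, hi⟩ := Function.ne_iff.mp hφ
    exact Finset.sum_pos' (fun j _ => div_nonneg (mul_self_nonneg _) (hd j).le)
      ⟨i, Finset.mem_univ _, div_pos (mul_self_pos.mpr hi) (hd i)⟩
  have : φ ⬝ᵥ (fun i => -μ * φ i / d i) = -μ * ∑ i, φ i * φ i / d i := by
    simp only [dotProduct, Finset.mul_sum]
    exact Finset.sum_congr rfl fun i _ => by ring
  rw [this] at hpos
  nlinarith

theorem exists_nonneg_hasEig_neg_diagonal_mul (hd : ∀ i, 0 < d i) (hA : A.IsHermitian)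
    {ψ : n → ℝ} (hψ : ψ ≠ 0) (hq : ψ ⬝ᵥ A *ᵥ ψ ≤ 0) :
    ∃ μ, 0 ≤ μ ∧ HasEig (-(diagonal d * A)) μ := by
  set r : n → ℝ := fun i => √(d i)
  have hr : ∀ i, 0 < r i := fun i => Real.sqrt_pos.mpr (hd i)
  have hrr : diagonal d = diagonal r * diagonal r := by
    rw [diagonal_mul_diagonal]
    exact congrArg diagonal (funext fun i => (Real.mul_self_sqrt (hd i).le).symm)
  set S := diagonal r * A * diagonal r
  have hS : S.IsHermitian := by
    simpa [S, Matrix.mul_assoc] using isHermitian_conjTranspose_mul_mul (diagonal r) hA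
  have hdot : ∀ v, v ⬝ᵥ S *ᵥ v = (diagonal r *ᵥ v) ⬝ᵥ A *ᵥ (diagonal r *ᵥ v) := by
    intro v
    rw [← mulVec_mulVec, ← mulVec_mulVec, dotProduct_mulVec]
    congr 1
    ext i
    simp [vecMul_diagonal, mulVec_diagonal, mul_comm]
  set v := diagonal r⁻¹ *ᵥ ψ
  have hv : diagonal r *ᵥ v = ψ := by
    ext i
    simp [v, mulVec_diagonal, (hr i).ne']
  have hv0 : v ≠ 0 := by
    rintro h
    simp [h] at hv
    exact hψ hv.symm
  obtain ⟨j, hj⟩ := hS.exists_eigenvalues_nonpos hv0 (by rwa [hdot, hv])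
  set u := (hS.eigenvectorBasis j).ofLp
  refine ⟨-hS.eigenvalues j, neg_nonneg.mpr hj, diagonal r *ᵥ u, ?_, ?_⟩
  · have hu : u ≠ 0 := by simpa [u] using hS.eigenvectorBasis.orthonormal.ne_zero j
    intro h
    apply hu
    ext i
    simpa [mulVec_diagonal, (hr i).ne'] using congrFun h i
  · have : (diagonal d * A) *ᵥ (diagonal r *ᵥ u) = diagonal r *ᵥ (S *ᵥ u) := by
      simp only [hrr, S, mulVec_mulVec, Matrix.mul_assoc]
    rw [neg_mulVec, this, hS.mulVec_eigenvectorBasis, mulVec_smul, neg_smul]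

end LinearStability

section Weight

variable (γ δ : ℝ)

noncomputable def ω (r : ℝ) : ℝ := 1 / (1 + Real.exp (γ * r ^ 2 - γ * δ))

noncomputable def ω' (r : ℝ) : ℝ := -(2 * γ * r * ω γ δ r * (1 - ω γ δ r))

theorem ω_pos (r : ℝ) : 0 < ω γ δ r := by unfold ω; positivity

theorem ω_neg (r : ℝ) : ω γ δ (-r) = ω γ δ r := by simp only [ω, neg_sq]

theorem ω'_neg (r : ℝ) : ω' γ δ (-r) = -ω' γ δ r := by
  unfold ω'
  rw [ω_neg]
  ring

theorem hasDerivAt_ω (r : ℝ) : HasDerivAt (ω γ δ) (ω' γ δ r) r := by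
  have hE : HasDerivAt (fun u => 1 + Real.exp (γ * u ^ 2 - γ * δ))
      (Real.exp (γ * r ^ 2 - γ * δ) * (γ * (2 * r))) r := by
    have := ((hasDerivAt_pow 2 r).const_mul γ).sub_const (γ * δ)
    simpa using (this.exp).const_add 1
  refine ((hasDerivAt_const r (1 : ℝ)).fun_div hE (by positivity)).congr_deriv ?_
  unfold ω' ω
  field_simp
  ring

noncomputable def κ : ℝ := 2 * ω γ δ 1 * (1 - 2 * γ * (1 - ω γ δ 1))

theorem κ_eq : κ γ δ = 2 * (ω γ δ 1 + ω' γ δ 1) := by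
  unfold κ ω'
  ring

end Weight

section Jacobian

variable {V : Type*} (G : SimpleGraph V) [DecidableRel G.Adj] (γ δ : ℝ)

theorem wt_eq_ite (x : V → ℝ) (i j : V) :
    wt G γ δ x i j = if G.Adj i j then ω γ δ (x i - x j) else 0 := rfl

variable [Fintype V]

noncomputable def strength (x : V → ℝ) (i : V) : ℝ := ∑ j, wt G γ δ x i j

noncomputable def netInfluence (x : V → ℝ) (i : V) : ℝ := ∑ j, wt G γ δ x i j * (x j - x i)

theorem strength_pos {i : V} (hi : ∃ j, G.Adj i j) (x : V → ℝ) : 0 < strength G γ δ x i := by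
  obtain ⟨j, hj⟩ := hi
  refine Finset.sum_pos' (fun k _ => ?_) ⟨j, Finset.mem_univ _, ?_⟩
  · rw [wt_eq_ite]
    split_ifs <;> simp [(ω_pos γ δ _).le]
  · simpa [wt_eq_ite, hj] using ω_pos γ δ _

theorem hasFDerivAt_wt (x : V → ℝ) (i j : V) :
    HasFDerivAt (fun y => wt G γ δ y i j)
      ((if G.Adj i j then ω' γ δ (x i - x j) else 0) •
        ((ContinuousLinearMap.proj i : (V → ℝ) →L[ℝ] ℝ) - ContinuousLinearMap.proj j)) x := by
  simp only [wt_eq_ite]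
  split_ifs
  · exact (hasDerivAt_ω γ δ _).comp_hasFDerivAt x
      ((hasFDerivAt_apply i x).sub (hasFDerivAt_apply j x))
  · simpa using hasFDerivAt_const (0 : ℝ) x

theorem differentiable_wt (i j : V) : Differentiable ℝ (fun y => wt G γ δ y i j) :=
  fun x => (hasFDerivAt_wt G γ δ x i j).differentiableAt

theorem fderiv_netInfluence_apply (x h : V → ℝ) (i : V) :
    fderiv ℝ (fun y => netInfluence G γ δ y i) x h =
      ∑ j, (wt G γ δ x i j * (h j - h i) +
        (x j - x i) * ((if G.Adj i j then ω' γ δ (x i - x j) else 0) * (h i - h j))) := by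
  have hdiff : ∀ j : V, HasFDerivAt (fun y : V → ℝ => y j - y i)
      ((ContinuousLinearMap.proj j : (V → ℝ) →L[ℝ] ℝ) - ContinuousLinearMap.proj i) x :=
    fun j => (hasFDerivAt_apply j x).sub (hasFDerivAt_apply i x)
  unfold netInfluence
  rw [(HasFDerivAt.fun_sum fun j _ => (hasFDerivAt_wt G γ δ x i j).fun_mul (hdiff j)).fderiv]
  simp only [FunLike.coe_sum, Finset.sum_apply]
  refine Finset.sum_congr rfl fun j _ => ?_
  split_ifs <;> simp

variable [DecidableEq V]

theorem F_eq_div {Z : Finset V} {i : V} (hi : i ∉ Z) (x : V → ℝ) :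
    F G Z γ δ x i = netInfluence G γ δ x i / strength G γ δ x i := by
  simp [F, hi, netInfluence, strength]

theorem Jp_apply_of_netInfluence_eq_zero {Z : Finset V} {x : V → ℝ} (i k : {v : V // v ∉ Z})
    (hN : netInfluence G γ δ x i = 0) (hs : strength G γ δ x i ≠ 0) :
    Jp G Z γ δ x i k =
      fderiv ℝ (fun y => netInfluence G γ δ y i) x (Pi.single k 1) / strength G γ δ x i := by
  have hwt := differentiable_wt G γ δ
  have hN' : DifferentiableAt ℝ (fun y => netInfluence G γ δ y i) x := by
    unfold netInfluence
    fun_prop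
  have hs' : DifferentiableAt ℝ (fun y => strength G γ δ y i) x := by
    unfold strength
    fun_prop
  simp only [Jp, F_eq_div G γ δ i.2,
    (hN'.hasFDerivAt.div_of_eq_zero hs'.hasFDerivAt hN hs).fderiv]
  simp [div_eq_inv_mul]

end Jacobian

section Harmonic

variable {V : Type*}

-- `G.induce` lives on `↥{v | v ∉ Z}`; restating it on `{v // v ∉ Z}`, the index type of `Jp`,
-- lets its Laplacian be combined with matrices indexed like `Jp`.
def persuadableGraph (G : SimpleGraph V) (Z : Finset V) : SimpleGraph {v : V // v ∉ Z} :=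
  G.induce {v | v ∉ Z}

@[simp]
theorem persuadableGraph_adj {G : SimpleGraph V} {Z : Finset V} {i j : {v : V // v ∉ Z}} :
    (persuadableGraph G Z).Adj i j ↔ G.Adj i j := Iff.rfl

instance (G : SimpleGraph V) [DecidableRel G.Adj] (Z : Finset V) :
    DecidableRel (persuadableGraph G Z).Adj :=
  fun _ _ => decidable_of_iff _ persuadableGraph_adj.symm

variable [DecidableEq V] {z₁ z₂ : V}

theorem xbarBE_left : xbarBE z₁ z₂ z₁ = -1 := by simp [xbarBE]

theorem xbarBE_right (hzz : z₁ ≠ z₂) : xbarBE z₁ z₂ z₂ = 1 := by simp [xbarBE, hzz.symm]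

theorem xbarBE_of_notMem {i : V} (hi : i ∉ ({z₁, z₂} : Finset V)) : xbarBE z₁ z₂ i = 0 := by
  simp only [Finset.mem_insert, Finset.mem_singleton, not_or] at hi
  simp [xbarBE, hi.1, hi.2]

variable [Fintype V] (G : SimpleGraph V) [DecidableRel G.Adj] (γ δ : ℝ)

noncomputable def harmonicMatrix (z₁ z₂ : V) :
    Matrix {v : V // v ∉ ({z₁, z₂} : Finset V)} {v : V // v ∉ ({z₁, z₂} : Finset V)} ℝ :=
  ω γ δ 0 • (persuadableGraph G {z₁, z₂}).lapMatrix ℝ +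
    diagonal fun i : {v : V // v ∉ ({z₁, z₂} : Finset V)} => if G.Adj i z₁ then κ γ δ else 0

theorem netInfluence_xbarBE (hzz : z₁ ≠ z₂)
    (hBE : ∀ i : V, i ∉ ({z₁, z₂} : Finset V) → (G.Adj i z₁ ↔ G.Adj i z₂))
    {i : V} (hi : i ∉ ({z₁, z₂} : Finset V)) : netInfluence G γ δ (xbarBE z₁ z₂) i = 0 := by
  rw [netInfluence, Fintype.sum_eq_add_add_sum_subtype_notMem hzz]
  simp only [wt_eq_ite, xbarBE_left, xbarBE_right hzz, xbarBE_of_notMem hi,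
    fun j : {v : V // v ∉ ({z₁, z₂} : Finset V)} => xbarBE_of_notMem (z₁ := z₁) j.2, ← hBE i hi]
  split_ifs <;> norm_num [ω_neg]

theorem fderiv_netInfluence_xbarBE (hzz : z₁ ≠ z₂)
    (hBE : ∀ i : V, i ∉ ({z₁, z₂} : Finset V) → (G.Adj i z₁ ↔ G.Adj i z₂))
    {h : V → ℝ} (hz₁ : h z₁ = 0) (hz₂ : h z₂ = 0) (i : {v : V // v ∉ ({z₁, z₂} : Finset V)}) :
    fderiv ℝ (fun y => netInfluence G γ δ y i) (xbarBE z₁ z₂) h =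
      -(harmonicMatrix G γ δ z₁ z₂ *ᵥ fun j => h j) i := by
  rw [fderiv_netInfluence_apply, Fintype.sum_eq_add_add_sum_subtype_notMem hzz, harmonicMatrix,
    add_mulVec, smul_mulVec, Pi.add_apply, Pi.smul_apply, mulVec_diagonal,
    SimpleGraph.lapMatrix_mulVec_apply_eq_sum, smul_eq_mul, Finset.mul_sum]
  simp only [wt_eq_ite, xbarBE_left, xbarBE_right hzz, xbarBE_of_notMem i.2,
    fun j : {v : V // v ∉ ({z₁, z₂} : Finset V)} => xbarBE_of_notMem (z₁ := z₁) j.2, ← hBE i i.2,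
    hz₁, hz₂, persuadableGraph_adj, sub_self, zero_mul, add_zero]
  have hP : ∑ j : {v : V // v ∉ ({z₁, z₂} : Finset V)},
      (if G.Adj i j then ω γ δ 0 else 0) * (h j - h i) =
        -∑ j : {v : V // v ∉ ({z₁, z₂} : Finset V)},
          ω γ δ 0 * if G.Adj i j then h i - h j else 0 := by
    rw [← Finset.sum_neg_distrib]
    refine Finset.sum_congr rfl fun j _ => ?_
    split_ifs <;> ring
  rw [hP]
  norm_num [ω_neg, ω'_neg, κ_eq]
  split_ifs <;> ring

theorem isHermitian_harmonicMatrix (z₁ z₂ : V) : (harmonicMatrix G γ δ z₁ z₂).IsHermitian :=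
  (((persuadableGraph G _).isHermitian_lapMatrix ℝ).smul (.all _)).add (isHermitian_diagonal _)

theorem posDef_harmonicMatrix (hconn : (G.induce {v | v ∉ ({z₁, z₂} : Finset V)}).Connected)
    (hκ : 0 < κ γ δ) (hadj : ∃ i ∉ ({z₁, z₂} : Finset V), G.Adj i z₁) :
    (harmonicMatrix G γ δ z₁ z₂).PosDef := by
  obtain ⟨i, hi, hiz₁⟩ := hadj
  refine SimpleGraph.posDef_smul_lapMatrix_add_diagonal (H := persuadableGraph G {z₁, z₂}) hconn
    (ω_pos γ δ 0) (fun j => ?_) ⟨⟨i, hi⟩, by simp [hiz₁, hκ]⟩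
  dsimp only
  split_ifs <;> simp [hκ.le]

theorem one_dotProduct_harmonicMatrix_mulVec_one (z₁ z₂ : V) :
    (fun _ => 1) ⬝ᵥ harmonicMatrix G γ δ z₁ z₂ *ᵥ (fun _ => 1) =
      ∑ i : {v : V // v ∉ ({z₁, z₂} : Finset V)}, if G.Adj i z₁ then κ γ δ else 0 := by
  simp [harmonicMatrix, add_mulVec, smul_mulVec, SimpleGraph.lapMatrix_mulVec_const_eq_zero,
    dotProduct, mulVec_diagonal]

theorem Jp_xbarBE (hzz : z₁ ≠ z₂)
    (hnbr : ∀ i : V, i ∉ ({z₁, z₂} : Finset V) → ∃ j, G.Adj i j)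
    (hBE : ∀ i : V, i ∉ ({z₁, z₂} : Finset V) → (G.Adj i z₁ ↔ G.Adj i z₂)) :
    Jp G {z₁, z₂} γ δ (xbarBE z₁ z₂) =
      -(diagonal (fun i : {v : V // v ∉ ({z₁, z₂} : Finset V)} =>
          (strength G γ δ (xbarBE z₁ z₂) i)⁻¹) * harmonicMatrix G γ δ z₁ z₂) := by
  ext i k
  have hk : ∀ z ∈ ({z₁, z₂} : Finset V), (Pi.single (k : V) 1 : V → ℝ) z = 0 :=
    fun z hz => Pi.single_eq_of_ne (by rintro rfl; exact k.2 hz) _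
  have hsingle : (fun j : {v : V // v ∉ ({z₁, z₂} : Finset V)} =>
      (Pi.single (k : V) 1 : V → ℝ) j) = Pi.single k 1 := by
    ext j
    simp [Pi.single_apply, Subtype.ext_iff]
  rw [Jp_apply_of_netInfluence_eq_zero G γ δ i k (netInfluence_xbarBE G γ δ hzz hBE i.2)
      (strength_pos G γ δ (hnbr i i.2) _).ne',
    fderiv_netInfluence_xbarBE G γ δ hzz hBE (hk z₁ (by simp)) (hk z₂ (by simp)) i, hsingle,
    mulVec_single_one]
  simp [diagonal_mul, div_eq_inv_mul]

end Harmonic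

end SBCM

theorem stmt_17_general {V : Type*} [Fintype V] [DecidableEq V]
    (G : SimpleGraph V) [DecidableRel G.Adj] (z₁ z₂ : V) (hzz : z₁ ≠ z₂)
    (hnbr : ∀ i : V, i ∉ ({z₁, z₂} : Finset V) → ∃ j, G.Adj i j)
    (hBE : ∀ i : V, i ∉ ({z₁, z₂} : Finset V) → (G.Adj i z₁ ↔ G.Adj i z₂))
    (hconn : (G.induce {v : V | v ∉ ({z₁, z₂} : Finset V)}).Connected)
    (hadj : ∃ i : V, i ∉ ({z₁, z₂} : Finset V) ∧ G.Adj i z₁ ∧ G.Adj i z₂)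
    (γ δ : ℝ) :
    (0 < 1 - 2 * γ * (1 - 1 / (1 + Real.exp (γ * (1 - δ)))) →
      SBCM.LinStable
        (SBCM.Jp G ({z₁, z₂} : Finset V) γ δ (SBCM.xbarBE z₁ z₂))) ∧
    (1 - 2 * γ * (1 - 1 / (1 + Real.exp (γ * (1 - δ)))) ≤ 0 →
      ∃ μ : ℝ, 0 ≤ μ ∧
        SBCM.HasEig (SBCM.Jp G ({z₁, z₂} : Finset V) γ δ (SBCM.xbarBE z₁ z₂)) μ) := by
  obtain ⟨i₀, hi₀, hi₀z₁, -⟩ := hadj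
  have hω : 1 / (1 + Real.exp (γ * (1 - δ))) = SBCM.ω γ δ 1 := by
    rw [SBCM.ω]
    ring_nf
  have hκ : SBCM.κ γ δ = 2 * SBCM.ω γ δ 1 * (1 - 2 * γ * (1 - SBCM.ω γ δ 1)) := rfl
  have hd : ∀ i : {v : V // v ∉ ({z₁, z₂} : Finset V)},
      0 < (SBCM.strength G γ δ (SBCM.xbarBE z₁ z₂) i)⁻¹ :=
    fun i => inv_pos.mpr (SBCM.strength_pos G γ δ (hnbr i i.2) _)
  have h2ω : 0 < 2 * SBCM.ω γ δ 1 := by linarith [SBCM.ω_pos γ δ 1]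
  rw [hω, SBCM.Jp_xbarBE G γ δ hzz hnbr hBE]
  refine ⟨fun hpos => SBCM.linStable_neg_diagonal_mul hd ?_, fun hle => ?_⟩
  · exact SBCM.posDef_harmonicMatrix G γ δ hconn (hκ ▸ mul_pos h2ω hpos) ⟨i₀, hi₀, hi₀z₁⟩
  · refine SBCM.exists_nonneg_hasEig_neg_diagonal_mul hd
      (SBCM.isHermitian_harmonicMatrix G γ δ z₁ z₂) (ψ := fun _ => 1) (Function.ne_iff.mpr ⟨⟨i₀, hi₀⟩, one_ne_zero⟩) ?_
    rw [SBCM.one_dotProduct_harmonicMatrix_mulVec_one]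
    have : SBCM.κ γ δ ≤ 0 := hκ ▸ mul_nonpos_of_nonneg_of_nonpos h2ω.le hle
    exact Finset.sum_nonpos fun i _ => by split_ifs <;> simp [this]

/-- On a balanced-exposure graph with connected persuadable subgraph and
at least one persuadable node adjacent to the two zealots, with `v = ω(1)`: if
`1 − 2γ(1 − v) > 0` the harmonic state is linearly stable, and if `1 − 2γ(1 − v) ≤ 0`
the Jacobian block has a nonnegative eigenvalue, so it is not linearly stable. -/
theorem stmt_17 {V : Type*} [Fintype V] [DecidableEq V]
    (G : SimpleGraph V) [DecidableRel G.Adj] (z₁ z₂ : V) (hzz : z₁ ≠ z₂)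
    (hnbr : ∀ i : V, i ∉ ({z₁, z₂} : Finset V) → ∃ j, G.Adj i j)
    (hBE : ∀ i : V, i ∉ ({z₁, z₂} : Finset V) → (G.Adj i z₁ ↔ G.Adj i z₂))
    (hconn : (G.induce {v : V | v ∉ ({z₁, z₂} : Finset V)}).Connected)
    (hadj : ∃ i : V, i ∉ ({z₁, z₂} : Finset V) ∧ G.Adj i z₁ ∧ G.Adj i z₂)
    (γ δ : ℝ) (hγ : 0 ≤ γ) (hδ : 0 ≤ δ) :
    (0 < 1 - 2 * γ * (1 - 1 / (1 + Real.exp (γ * (1 - δ)))) →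
      SBCM.LinStable
        (SBCM.Jp G ({z₁, z₂} : Finset V) γ δ (SBCM.xbarBE z₁ z₂))) ∧
    (1 - 2 * γ * (1 - 1 / (1 + Real.exp (γ * (1 - δ)))) ≤ 0 →
      ∃ μ : ℝ, 0 ≤ μ ∧
        SBCM.HasEig (SBCM.Jp G ({z₁, z₂} : Finset V) γ δ (SBCM.xbarBE z₁ z₂)) μ) :=
  stmt_17_general G z₁ z₂ hzz hnbr hBE hconn hadj γ δ
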